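/- Let q, q', ℓ be nonzero complex numbers and let A_{q,q',ℓ} be the q-linked quantum group algebra. Writing x₁₁ = a, x₁₂ = b, x₂₁ = c, x₂₂ = d and y₁₁ = a', y₁₂ = b', y₂₁ = c', y₂₂ = d', there exists a unique ℂ-algebra homomorphism Δ : A_{q,q',ℓ} → A_{q,q',ℓ} ⊗ A_{q,q',ℓ} with Δ(x_{ij}) = Σ_{k=1,2} x_{ik} ⊗ x_{kj} and Δ(y_{ij}) = Σ_{k=1,2} y_{ik} ⊗ y_{kj} for all i, j ∈ {1,2}. -/
import Mathlib


noncomputable section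

open FreeAlgebra
open scoped TensorProduct

/-- The relations of the q-linked quantum group algebra `A_{q,q',ℓ}`: generators
`a = ι ℂ 0, b = ι ℂ 1, c = ι ℂ 2, d = ι ℂ 3` (chiral sector, Manin relations with
parameter `q`), `a' = ι ℂ 4, b' = ι ℂ 5, c' = ι ℂ 6, d' = ι ℂ 7` (antichiral
sector, Manin relations with parameter `1/q'`), the link relations, the commutation
relations between the two sectors, and the two determinant relations. -/
inductive ALinkRel (q q' ℓ : ℂ) :
    FreeAlgebra ℂ (Fin 8) → FreeAlgebra ℂ (Fin 8) → Prop
  | ab : ALinkRel q q' ℓ (ι ℂ 0 * ι ℂ 1) (q⁻¹ • (ι ℂ 1 * ι ℂ 0))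
  | ac : ALinkRel q q' ℓ (ι ℂ 0 * ι ℂ 2) (q⁻¹ • (ι ℂ 2 * ι ℂ 0))
  | bd : ALinkRel q q' ℓ (ι ℂ 1 * ι ℂ 3) (q⁻¹ • (ι ℂ 3 * ι ℂ 1))
  | cd : ALinkRel q q' ℓ (ι ℂ 2 * ι ℂ 3) (q⁻¹ • (ι ℂ 3 * ι ℂ 2))
  | bc : ALinkRel q q' ℓ (ι ℂ 1 * ι ℂ 2) (ι ℂ 2 * ι ℂ 1)
  | ad : ALinkRel q q' ℓ (ι ℂ 0 * ι ℂ 3 - ι ℂ 3 * ι ℂ 0) ((q⁻¹ - q) • (ι ℂ 1 * ι ℂ 2))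
  | ab' : ALinkRel q q' ℓ (ι ℂ 4 * ι ℂ 5) (q' • (ι ℂ 5 * ι ℂ 4))
  | ac' : ALinkRel q q' ℓ (ι ℂ 4 * ι ℂ 6) (q' • (ι ℂ 6 * ι ℂ 4))
  | bd' : ALinkRel q q' ℓ (ι ℂ 5 * ι ℂ 7) (q' • (ι ℂ 7 * ι ℂ 5))
  | cd' : ALinkRel q q' ℓ (ι ℂ 6 * ι ℂ 7) (q' • (ι ℂ 7 * ι ℂ 6))
  | bc' : ALinkRel q q' ℓ (ι ℂ 5 * ι ℂ 6) (ι ℂ 6 * ι ℂ 5)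
  | ad' : ALinkRel q q' ℓ (ι ℂ 4 * ι ℂ 7 - ι ℂ 7 * ι ℂ 4) ((q' - q'⁻¹) • (ι ℂ 5 * ι ℂ 6))
  | link₁ : ALinkRel q q' ℓ (ι ℂ 5 * ι ℂ 0) (ℓ • (ι ℂ 0 * ι ℂ 5))
  | link₂ : ALinkRel q q' ℓ (ι ℂ 0 * ι ℂ 6) (ℓ • (ι ℂ 6 * ι ℂ 0))
  | link₃ : ALinkRel q q' ℓ (ι ℂ 4 * ι ℂ 1) (ℓ • (ι ℂ 1 * ι ℂ 4))
  | link₄ : ALinkRel q q' ℓ (ι ℂ 1 * ι ℂ 7) (ℓ • (ι ℂ 7 * ι ℂ 1))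
  | link₅ : ALinkRel q q' ℓ (ι ℂ 2 * ι ℂ 4) (ℓ • (ι ℂ 4 * ι ℂ 2))
  | link₆ : ALinkRel q q' ℓ (ι ℂ 7 * ι ℂ 2) (ℓ • (ι ℂ 2 * ι ℂ 7))
  | link₇ : ALinkRel q q' ℓ (ι ℂ 3 * ι ℂ 5) (ℓ • (ι ℂ 5 * ι ℂ 3))
  | link₈ : ALinkRel q q' ℓ (ι ℂ 6 * ι ℂ 3) (ℓ • (ι ℂ 3 * ι ℂ 6))
  | comm₁ : ALinkRel q q' ℓ (ι ℂ 0 * ι ℂ 4) (ι ℂ 4 * ι ℂ 0)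
  | comm₂ : ALinkRel q q' ℓ (ι ℂ 0 * ι ℂ 7) (ι ℂ 7 * ι ℂ 0)
  | comm₃ : ALinkRel q q' ℓ (ι ℂ 1 * ι ℂ 5) (ι ℂ 5 * ι ℂ 1)
  | comm₄ : ALinkRel q q' ℓ (ι ℂ 1 * ι ℂ 6) (ι ℂ 6 * ι ℂ 1)
  | comm₅ : ALinkRel q q' ℓ (ι ℂ 2 * ι ℂ 5) (ι ℂ 5 * ι ℂ 2)
  | comm₆ : ALinkRel q q' ℓ (ι ℂ 2 * ι ℂ 6) (ι ℂ 6 * ι ℂ 2)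
  | comm₇ : ALinkRel q q' ℓ (ι ℂ 3 * ι ℂ 4) (ι ℂ 4 * ι ℂ 3)
  | comm₈ : ALinkRel q q' ℓ (ι ℂ 3 * ι ℂ 7) (ι ℂ 7 * ι ℂ 3)
  | det : ALinkRel q q' ℓ (ι ℂ 0 * ι ℂ 3 - q⁻¹ • (ι ℂ 1 * ι ℂ 2)) 1
  | det' : ALinkRel q q' ℓ (ι ℂ 4 * ι ℂ 7 - q' • (ι ℂ 5 * ι ℂ 6)) 1

/-- The q-linked quantum group algebra `A_{q,q',ℓ}`. -/
abbrev ALink (q q' ℓ : ℂ) := RingQuot (ALinkRel q q' ℓ)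

/-- The images of the eight generators. -/
def gen (q q' ℓ : ℂ) (i : Fin 8) : ALink q q' ℓ :=
  RingQuot.mkAlgHom ℂ (ALinkRel q q' ℓ) (ι ℂ i)

/-- The chiral matrix of generators `(x_{ij}) = (a b; c d)`. -/
def X (q q' ℓ : ℂ) : Fin 2 → Fin 2 → ALink q q' ℓ :=
  ![![gen q q' ℓ 0, gen q q' ℓ 1], ![gen q q' ℓ 2, gen q q' ℓ 3]]

/-- The antichiral matrix of generators `(y_{ij}) = (a' b'; c' d')`. -/
def Y (q q' ℓ : ℂ) : Fin 2 → Fin 2 → ALink q q' ℓ :=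
  ![![gen q q' ℓ 4, gen q q' ℓ 5], ![gen q q' ℓ 6, gen q q' ℓ 7]]

section Aux
variable (q q' ℓ : ℂ)

lemma rel_01 : gen q q' ℓ 0 * gen q q' ℓ 1 = q⁻¹ • (gen q q' ℓ 1 * gen q q' ℓ 0) := by
  simpa [gen] using RingQuot.mkAlgHom_rel ℂ (ALinkRel.ab (q := q) (q' := q') (ℓ := ℓ))

lemma rel_02 : gen q q' ℓ 0 * gen q q' ℓ 2 = q⁻¹ • (gen q q' ℓ 2 * gen q q' ℓ 0) := by
  simpa [gen] using RingQuot.mkAlgHom_rel ℂ (ALinkRel.ac (q := q) (q' := q') (ℓ := ℓ))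

lemma rel_13 : gen q q' ℓ 1 * gen q q' ℓ 3 = q⁻¹ • (gen q q' ℓ 3 * gen q q' ℓ 1) := by
  simpa [gen] using RingQuot.mkAlgHom_rel ℂ (ALinkRel.bd (q := q) (q' := q') (ℓ := ℓ))

lemma rel_23 : gen q q' ℓ 2 * gen q q' ℓ 3 = q⁻¹ • (gen q q' ℓ 3 * gen q q' ℓ 2) := by
  simpa [gen] using RingQuot.mkAlgHom_rel ℂ (ALinkRel.cd (q := q) (q' := q') (ℓ := ℓ))

lemma rel_12 : gen q q' ℓ 1 * gen q q' ℓ 2 = gen q q' ℓ 2 * gen q q' ℓ 1 := by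
  simpa [gen] using RingQuot.mkAlgHom_rel ℂ (ALinkRel.bc (q := q) (q' := q') (ℓ := ℓ))

lemma rel_45 : gen q q' ℓ 4 * gen q q' ℓ 5 = q' • (gen q q' ℓ 5 * gen q q' ℓ 4) := by
  simpa [gen] using RingQuot.mkAlgHom_rel ℂ (ALinkRel.ab' (q := q) (q' := q') (ℓ := ℓ))

lemma rel_46 : gen q q' ℓ 4 * gen q q' ℓ 6 = q' • (gen q q' ℓ 6 * gen q q' ℓ 4) := by
  simpa [gen] using RingQuot.mkAlgHom_rel ℂ (ALinkRel.ac' (q := q) (q' := q') (ℓ := ℓ))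

lemma rel_57 : gen q q' ℓ 5 * gen q q' ℓ 7 = q' • (gen q q' ℓ 7 * gen q q' ℓ 5) := by
  simpa [gen] using RingQuot.mkAlgHom_rel ℂ (ALinkRel.bd' (q := q) (q' := q') (ℓ := ℓ))

lemma rel_67 : gen q q' ℓ 6 * gen q q' ℓ 7 = q' • (gen q q' ℓ 7 * gen q q' ℓ 6) := by
  simpa [gen] using RingQuot.mkAlgHom_rel ℂ (ALinkRel.cd' (q := q) (q' := q') (ℓ := ℓ))

lemma rel_56 : gen q q' ℓ 5 * gen q q' ℓ 6 = gen q q' ℓ 6 * gen q q' ℓ 5 := by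
  simpa [gen] using RingQuot.mkAlgHom_rel ℂ (ALinkRel.bc' (q := q) (q' := q') (ℓ := ℓ))

lemma rel_50 : gen q q' ℓ 5 * gen q q' ℓ 0 = ℓ • (gen q q' ℓ 0 * gen q q' ℓ 5) := by
  simpa [gen] using RingQuot.mkAlgHom_rel ℂ (ALinkRel.link₁ (q := q) (q' := q') (ℓ := ℓ))

lemma rel_06 : gen q q' ℓ 0 * gen q q' ℓ 6 = ℓ • (gen q q' ℓ 6 * gen q q' ℓ 0) := by
  simpa [gen] using RingQuot.mkAlgHom_rel ℂ (ALinkRel.link₂ (q := q) (q' := q') (ℓ := ℓ))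

lemma rel_41 : gen q q' ℓ 4 * gen q q' ℓ 1 = ℓ • (gen q q' ℓ 1 * gen q q' ℓ 4) := by
  simpa [gen] using RingQuot.mkAlgHom_rel ℂ (ALinkRel.link₃ (q := q) (q' := q') (ℓ := ℓ))

lemma rel_17 : gen q q' ℓ 1 * gen q q' ℓ 7 = ℓ • (gen q q' ℓ 7 * gen q q' ℓ 1) := by
  simpa [gen] using RingQuot.mkAlgHom_rel ℂ (ALinkRel.link₄ (q := q) (q' := q') (ℓ := ℓ))

lemma rel_24 : gen q q' ℓ 2 * gen q q' ℓ 4 = ℓ • (gen q q' ℓ 4 * gen q q' ℓ 2) := by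
  simpa [gen] using RingQuot.mkAlgHom_rel ℂ (ALinkRel.link₅ (q := q) (q' := q') (ℓ := ℓ))

lemma rel_72 : gen q q' ℓ 7 * gen q q' ℓ 2 = ℓ • (gen q q' ℓ 2 * gen q q' ℓ 7) := by
  simpa [gen] using RingQuot.mkAlgHom_rel ℂ (ALinkRel.link₆ (q := q) (q' := q') (ℓ := ℓ))

lemma rel_35 : gen q q' ℓ 3 * gen q q' ℓ 5 = ℓ • (gen q q' ℓ 5 * gen q q' ℓ 3) := by
  simpa [gen] using RingQuot.mkAlgHom_rel ℂ (ALinkRel.link₇ (q := q) (q' := q') (ℓ := ℓ))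

lemma rel_63 : gen q q' ℓ 6 * gen q q' ℓ 3 = ℓ • (gen q q' ℓ 3 * gen q q' ℓ 6) := by
  simpa [gen] using RingQuot.mkAlgHom_rel ℂ (ALinkRel.link₈ (q := q) (q' := q') (ℓ := ℓ))

lemma rel_04 : gen q q' ℓ 0 * gen q q' ℓ 4 = gen q q' ℓ 4 * gen q q' ℓ 0 := by
  simpa [gen] using RingQuot.mkAlgHom_rel ℂ (ALinkRel.comm₁ (q := q) (q' := q') (ℓ := ℓ))

lemma rel_07 : gen q q' ℓ 0 * gen q q' ℓ 7 = gen q q' ℓ 7 * gen q q' ℓ 0 := by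
  simpa [gen] using RingQuot.mkAlgHom_rel ℂ (ALinkRel.comm₂ (q := q) (q' := q') (ℓ := ℓ))

lemma rel_15 : gen q q' ℓ 1 * gen q q' ℓ 5 = gen q q' ℓ 5 * gen q q' ℓ 1 := by
  simpa [gen] using RingQuot.mkAlgHom_rel ℂ (ALinkRel.comm₃ (q := q) (q' := q') (ℓ := ℓ))

lemma rel_16 : gen q q' ℓ 1 * gen q q' ℓ 6 = gen q q' ℓ 6 * gen q q' ℓ 1 := by
  simpa [gen] using RingQuot.mkAlgHom_rel ℂ (ALinkRel.comm₄ (q := q) (q' := q') (ℓ := ℓ))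

lemma rel_25 : gen q q' ℓ 2 * gen q q' ℓ 5 = gen q q' ℓ 5 * gen q q' ℓ 2 := by
  simpa [gen] using RingQuot.mkAlgHom_rel ℂ (ALinkRel.comm₅ (q := q) (q' := q') (ℓ := ℓ))

lemma rel_26 : gen q q' ℓ 2 * gen q q' ℓ 6 = gen q q' ℓ 6 * gen q q' ℓ 2 := by
  simpa [gen] using RingQuot.mkAlgHom_rel ℂ (ALinkRel.comm₆ (q := q) (q' := q') (ℓ := ℓ))

lemma rel_34 : gen q q' ℓ 3 * gen q q' ℓ 4 = gen q q' ℓ 4 * gen q q' ℓ 3 := by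
  simpa [gen] using RingQuot.mkAlgHom_rel ℂ (ALinkRel.comm₇ (q := q) (q' := q') (ℓ := ℓ))

lemma rel_37 : gen q q' ℓ 3 * gen q q' ℓ 7 = gen q q' ℓ 7 * gen q q' ℓ 3 := by
  simpa [gen] using RingQuot.mkAlgHom_rel ℂ (ALinkRel.comm₈ (q := q) (q' := q') (ℓ := ℓ))


lemma rel_03 : gen q q' ℓ 0 * gen q q' ℓ 3 = 1 + q⁻¹ • (gen q q' ℓ 2 * gen q q' ℓ 1) := by
  have h : gen q q' ℓ 0 * gen q q' ℓ 3 - q⁻¹ • (gen q q' ℓ 1 * gen q q' ℓ 2) = 1 := by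
    simpa [gen] using RingQuot.mkAlgHom_rel ℂ (ALinkRel.det (q := q) (q' := q') (ℓ := ℓ))
  rw [← rel_12 q q' ℓ]
  exact eq_add_of_sub_eq h

lemma rel_30 : gen q q' ℓ 3 * gen q q' ℓ 0 = 1 + q • (gen q q' ℓ 2 * gen q q' ℓ 1) := by
  have h : gen q q' ℓ 0 * gen q q' ℓ 3 - gen q q' ℓ 3 * gen q q' ℓ 0 = (q⁻¹ - q) • (gen q q' ℓ 1 * gen q q' ℓ 2) := by
    simpa [gen] using RingQuot.mkAlgHom_rel ℂ (ALinkRel.ad (q := q) (q' := q') (ℓ := ℓ))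
  have h2 : gen q q' ℓ 3 * gen q q' ℓ 0 = gen q q' ℓ 0 * gen q q' ℓ 3 - (q⁻¹ - q) • (gen q q' ℓ 1 * gen q q' ℓ 2) := by
    rw [← h]; abel
  rw [h2, rel_03 q q' ℓ, rel_12 q q' ℓ]
  module

lemma rel_47 : gen q q' ℓ 4 * gen q q' ℓ 7 = 1 + q' • (gen q q' ℓ 6 * gen q q' ℓ 5) := by
  have h : gen q q' ℓ 4 * gen q q' ℓ 7 - q' • (gen q q' ℓ 5 * gen q q' ℓ 6) = 1 := by
    simpa [gen] using RingQuot.mkAlgHom_rel ℂ (ALinkRel.det' (q := q) (q' := q') (ℓ := ℓ))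
  rw [← rel_56 q q' ℓ]
  exact eq_add_of_sub_eq h

lemma rel_74 : gen q q' ℓ 7 * gen q q' ℓ 4 = 1 + q'⁻¹ • (gen q q' ℓ 6 * gen q q' ℓ 5) := by
  have h : gen q q' ℓ 4 * gen q q' ℓ 7 - gen q q' ℓ 7 * gen q q' ℓ 4 = (q' - q'⁻¹) • (gen q q' ℓ 5 * gen q q' ℓ 6) := by
    simpa [gen] using RingQuot.mkAlgHom_rel ℂ (ALinkRel.ad' (q := q) (q' := q') (ℓ := ℓ))
  have h2 : gen q q' ℓ 7 * gen q q' ℓ 4 = gen q q' ℓ 4 * gen q q' ℓ 7 - (q' - q'⁻¹) • (gen q q' ℓ 5 * gen q q' ℓ 6) := by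
    rw [← h]; abel
  rw [h2, rel_47 q q' ℓ, rel_56 q q' ℓ]
  module

/-- The images of the generators under comultiplication. -/
def cf : Fin 8 → (ALink q q' ℓ ⊗[ℂ] ALink q q' ℓ)
  | 0 => gen q q' ℓ 0 ⊗ₜ[ℂ] gen q q' ℓ 0 + gen q q' ℓ 1 ⊗ₜ[ℂ] gen q q' ℓ 2
  | 1 => gen q q' ℓ 0 ⊗ₜ[ℂ] gen q q' ℓ 1 + gen q q' ℓ 1 ⊗ₜ[ℂ] gen q q' ℓ 3
  | 2 => gen q q' ℓ 2 ⊗ₜ[ℂ] gen q q' ℓ 0 + gen q q' ℓ 3 ⊗ₜ[ℂ] gen q q' ℓ 2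
  | 3 => gen q q' ℓ 2 ⊗ₜ[ℂ] gen q q' ℓ 1 + gen q q' ℓ 3 ⊗ₜ[ℂ] gen q q' ℓ 3
  | 4 => gen q q' ℓ 4 ⊗ₜ[ℂ] gen q q' ℓ 4 + gen q q' ℓ 5 ⊗ₜ[ℂ] gen q q' ℓ 6
  | 5 => gen q q' ℓ 4 ⊗ₜ[ℂ] gen q q' ℓ 5 + gen q q' ℓ 5 ⊗ₜ[ℂ] gen q q' ℓ 7
  | 6 => gen q q' ℓ 6 ⊗ₜ[ℂ] gen q q' ℓ 4 + gen q q' ℓ 7 ⊗ₜ[ℂ] gen q q' ℓ 6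
  | 7 => gen q q' ℓ 6 ⊗ₜ[ℂ] gen q q' ℓ 5 + gen q q' ℓ 7 ⊗ₜ[ℂ] gen q q' ℓ 7

set_option maxHeartbeats 2000000 in
lemma rel_lift (hq : q ≠ 0) (hq' : q' ≠ 0) (hℓ : ℓ ≠ 0) :
    ∀ ⦃x y⦄, ALinkRel q q' ℓ x y →
      (FreeAlgebra.lift ℂ (cf q q' ℓ)) x = (FreeAlgebra.lift ℂ (cf q q' ℓ)) y := by
  intro x y h
  induction h <;>
  · simp only [map_mul, map_smul, map_sub, map_one, lift_ι_apply, cf]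
    simp only [mul_add, add_mul, Algebra.TensorProduct.tmul_mul_tmul,
      rel_01, rel_02, rel_13, rel_23, rel_12, rel_45, rel_46, rel_57, rel_67, rel_56, rel_50, rel_06, rel_41, rel_17, rel_24, rel_72, rel_35, rel_63, rel_04, rel_07, rel_15, rel_16, rel_25, rel_26, rel_34, rel_37, rel_03, rel_30, rel_47, rel_74,
      TensorProduct.tmul_add, TensorProduct.add_tmul, TensorProduct.tmul_smul,
      ← TensorProduct.smul_tmul', smul_add, smul_smul, Algebra.TensorProduct.one_def]
    match_scalars <;> (field_simp; try ring)

end Aux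

/-- There is a unique `ℂ`-algebra homomorphism
`Δ : A_{q,q',ℓ} → A_{q,q',ℓ} ⊗ A_{q,q',ℓ}` acting by matrix comultiplication on
both the chiral and antichiral matrices of generators. -/
theorem comultiplication_exists_unique (q q' ℓ : ℂ) (hq : q ≠ 0) (hq' : q' ≠ 0)
    (hℓ : ℓ ≠ 0) :
    ∃! Δ : ALink q q' ℓ →ₐ[ℂ] (ALink q q' ℓ ⊗[ℂ] ALink q q' ℓ),
      (∀ i j : Fin 2,
        Δ (X q q' ℓ i j) = ∑ k : Fin 2, X q q' ℓ i k ⊗ₜ[ℂ] X q q' ℓ k j) ∧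
      (∀ i j : Fin 2,
        Δ (Y q q' ℓ i j) = ∑ k : Fin 2, Y q q' ℓ i k ⊗ₜ[ℂ] Y q q' ℓ k j) := by
  classical
  set Δ : ALink q q' ℓ →ₐ[ℂ] (ALink q q' ℓ ⊗[ℂ] ALink q q' ℓ) :=
    RingQuot.liftAlgHom ℂ ⟨FreeAlgebra.lift ℂ (cf q q' ℓ), rel_lift q q' ℓ hq hq' hℓ⟩ with hΔdef
  have hΔ : ∀ i : Fin 8, Δ (gen q q' ℓ i) = cf q q' ℓ i := by
    intro i
    simp [hΔdef, gen, RingQuot.liftAlgHom_mkAlgHom_apply]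
  have hX : ∀ i j : Fin 2,
      Δ (X q q' ℓ i j) = ∑ k : Fin 2, X q q' ℓ i k ⊗ₜ[ℂ] X q q' ℓ k j := by
    intro i j
    fin_cases i <;> fin_cases j <;>
      simp [X, Fin.sum_univ_two, hΔ, cf]
  have hY : ∀ i j : Fin 2,
      Δ (Y q q' ℓ i j) = ∑ k : Fin 2, Y q q' ℓ i k ⊗ₜ[ℂ] Y q q' ℓ k j := by
    intro i j
    fin_cases i <;> fin_cases j <;>
      simp [Y, Fin.sum_univ_two, hΔ, cf]
  refine ⟨Δ, ⟨hX, hY⟩, ?_⟩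
  rintro Δ' ⟨hX', hY'⟩
  have key : ∀ i : Fin 8, Δ' (gen q q' ℓ i) = Δ (gen q q' ℓ i) := by
    intro i
    fin_cases i
    · have h := hX' 0 0; simp [X, Fin.sum_univ_two] at h; simpa [X, Fin.sum_univ_two, hΔ, cf] using h
    · have h := hX' 0 1; simp [X, Fin.sum_univ_two] at h; simpa [X, Fin.sum_univ_two, hΔ, cf] using h
    · have h := hX' 1 0; simp [X, Fin.sum_univ_two] at h; simpa [X, Fin.sum_univ_two, hΔ, cf] using h
    · have h := hX' 1 1; simp [X, Fin.sum_univ_two] at h; simpa [X, Fin.sum_univ_two, hΔ, cf] using h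
    · have h := hY' 0 0; simp [Y, Fin.sum_univ_two] at h; simpa [Y, Fin.sum_univ_two, hΔ, cf] using h
    · have h := hY' 0 1; simp [Y, Fin.sum_univ_two] at h; simpa [Y, Fin.sum_univ_two, hΔ, cf] using h
    · have h := hY' 1 0; simp [Y, Fin.sum_univ_two] at h; simpa [Y, Fin.sum_univ_two, hΔ, cf] using h
    · have h := hY' 1 1; simp [Y, Fin.sum_univ_two] at h; simpa [Y, Fin.sum_univ_two, hΔ, cf] using h
  apply RingQuot.ringQuot_ext'
  apply FreeAlgebra.hom_ext
  funext i
  simpa [gen] using key i
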